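/- arXiv:1908.00235 — 5 statements merged into one kernel-verified Lean document; each statement's English description precedes it below -/
import Mathlib

section
/- Let m be a positive integer. Let R ∈ ℝ^{(m+1)×(m+1)} be upper triangular and invertible, with leading m×m principal submatrix R_m, with r̃ ∈ ℝ^m the vector of the first m entries of the last column of R, and ρ = R_{m+1,m+1} its bottom-right entry. Let Ĥ ∈ ℝ^{(m+1)×m} be a matrix whose first m rows form the matrix H^{(h)} ∈ ℝ^{m×m} and whose last row equals h^{(h)}·e_mᵀ for a scalar h^{(h)} ∈ ℝ. Let H̄ = R·Ĥ·R_m⁻¹ and let H ∈ ℝ^{m×m} be the matrix of the first m rows of H̄. Then H = R_m·H^{(h)}·R_m⁻¹ + (h^{(h)}/(R_m)_{m,m})·r̃·e_mᵀ. -/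
/-!
Splitting off the last summation index, the first `m` rows of `R Ĥ` are
`R_m H⁽ʰ⁾ + r̃ (h⁽ʰ⁾ e_mᵀ)`. As `R_m` is upper triangular, its last row is `(R_m)_{m,m} e_mᵀ`,
hence `e_mᵀ R_m⁻¹ = e_mᵀ / (R_m)_{m,m}`; multiplying on the right by `R_m⁻¹` gives the formula.
-/

namespace Matrix

theorem submatrix_mul_eq_castSucc_add_last {α l o p q : Type*} {n : ℕ}
    [NonUnitalNonAssocSemiring α] (A : Matrix l (Fin (n + 1)) α) (B : Matrix (Fin (n + 1)) p α)
    (e₁ : o → l) (e₂ : q → p) :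
    (A * B).submatrix e₁ e₂ =
      A.submatrix e₁ Fin.castSucc * B.submatrix Fin.castSucc e₂ +
        vecMulVec (fun i => A (e₁ i) (Fin.last n)) (fun j => B (Fin.last n) (e₂ j)) := by
  ext i j
  simp [mul_apply, Fin.sum_univ_castSucc, vecMulVec_apply]

theorem IsUpperTriangular.isUnit_submatrix_castSucc {R : Type*} [CommRing R] {n : ℕ}
    {M : Matrix (Fin (n + 1)) (Fin (n + 1)) R} (hM : M.IsUpperTriangular) (hu : IsUnit M) :
    IsUnit (M.submatrix Fin.castSucc Fin.castSucc) := by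
  have hM' : (M.submatrix Fin.castSucc Fin.castSucc).IsUpperTriangular := fun _ _ h => hM h
  rw [isUnit_iff_isUnit_det, det_of_isUpperTriangular hM] at hu
  rw [isUnit_iff_isUnit_det, det_of_isUpperTriangular hM']
  rw [Fin.prod_univ_castSucc] at hu
  exact isUnit_of_mul_isUnit_left hu

theorem IsUpperTriangular.row_eq_single_of_forall_le {R n : Type*} [Zero R] [LinearOrder n]
    {M : Matrix n n R} (hM : M.IsUpperTriangular) {i : n} (hi : ∀ j, j ≤ i) :
    M i = Pi.single i (M i i) := by
  ext j
  rcases (hi j).lt_or_eq with hj | rfl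
  · rw [Pi.single_eq_of_ne hj.ne, hM hj]
  · rw [Pi.single_eq_same]

theorem IsUpperTriangular.inv_row_eq_single_of_forall_le {K n : Type*} [Field K] [Fintype n]
    [LinearOrder n]
    {M : Matrix n n K} (hM : M.IsUpperTriangular) (hu : IsUnit M) {i : n} (hi : ∀ j, j ≤ i) :
    M⁻¹ i = Pi.single i (M i i)⁻¹ := by
  have hdiag : M i i ≠ 0 := by
    rw [isUnit_iff_isUnit_det, det_of_isUpperTriangular hM, isUnit_iff_ne_zero] at hu
    exact fun h => hu (Finset.prod_eq_zero (Finset.mem_univ i) h)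
  have hrow : M i i • M⁻¹ i = Pi.single i 1 := by
    ext j
    have h := congrFun₂ (mul_nonsing_inv M ((isUnit_iff_isUnit_det M).mp hu)) i j
    rw [mul_apply, hM.row_eq_single_of_forall_le hi, one_eq_pi_single] at h
    simpa [Pi.single_apply] using h
  calc M⁻¹ i = (M i i)⁻¹ • (M i i • M⁻¹ i) := (inv_smul_smul₀ hdiag _).symm
    _ = Pi.single i (M i i)⁻¹ := by rw [hrow, ← Pi.single_smul, smul_eq_mul, mul_one]

end Matrix

open Matrix in
/-- Proposition 2.1, Eq. (2.12): with `R ∈ ℝ^{(m+1)×(m+1)}` upper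
triangular invertible, `Rm` its leading `m×m` principal submatrix, `r̃` the first `m`
entries of the last column of `R`, `Ĥ` with first `m` rows `H⁽ʰ⁾` and last row
`h⁽ʰ⁾·e_mᵀ`, `H̄ = R·Ĥ·Rm⁻¹` and `H` the first `m` rows of `H̄`, one has
`H = Rm·H⁽ʰ⁾·Rm⁻¹ + (h⁽ʰ⁾/(Rm)_{m,m})·r̃·e_mᵀ`. -/
theorem arnoldi_hessenberg_projected_matrices_relation
    (m : ℕ) (hm : 0 < m)
    (R : Matrix (Fin (m + 1)) (Fin (m + 1)) ℝ)
    (htri : ∀ i j : Fin (m + 1), (j : ℕ) < (i : ℕ) → R i j = 0)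
    (hinv : IsUnit R)
    (Rm : Matrix (Fin m) (Fin m) ℝ)
    (hRm : Rm = R.submatrix Fin.castSucc Fin.castSucc)
    (rtil : Fin m → ℝ)
    (hrtil : rtil = fun i => R (Fin.castSucc i) (Fin.last m))
    (Hhat : Matrix (Fin (m + 1)) (Fin m) ℝ)
    (Hh : Matrix (Fin m) (Fin m) ℝ) (hh : ℝ)
    (hHh : Hh = Hhat.submatrix Fin.castSucc id)
    (hrow : ∀ j : Fin m,
      Hhat (Fin.last m) j = hh * (Pi.single (⟨m - 1, by omega⟩ : Fin m) (1 : ℝ) : Fin m → ℝ) j)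
    (Hbar : Matrix (Fin (m + 1)) (Fin m) ℝ)
    (hHbar : Hbar = R * Hhat * Rm⁻¹)
    (H : Matrix (Fin m) (Fin m) ℝ)
    (hH : H = Hbar.submatrix Fin.castSucc id) :
    H = Rm * Hh * Rm⁻¹ +
      (hh / Rm ⟨m - 1, by omega⟩ ⟨m - 1, by omega⟩) •
        Matrix.vecMulVec rtil (Pi.single (⟨m - 1, by omega⟩ : Fin m) (1 : ℝ) : Fin m → ℝ) := by
  set last : Fin m := ⟨m - 1, by omega⟩
  have hR : R.IsUpperTriangular := fun i j h => htri i j h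
  have hRm_tri : Rm.IsUpperTriangular := hRm ▸ fun _ _ h => hR h
  have hRm_unit : IsUnit Rm := hRm ▸ hR.isUnit_submatrix_castSucc hinv
  have hlast : ∀ j, j ≤ last := fun j => Fin.le_def.mpr (by simp [last]; omega)
  have hHhat_last : Hhat (Fin.last m) = Pi.single last hh :=
    funext fun j => by simp [hrow, Pi.single_apply]
  have hinv_last : Rm⁻¹.row last = Pi.single last (Rm last last)⁻¹ :=
    hRm_tri.inv_row_eq_single_of_forall_le hRm_unit hlast
  calc H = (R * Hhat).submatrix Fin.castSucc id * Rm⁻¹ := by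
        rw [hH, hHbar, submatrix_mul _ _ _ id _ Function.bijective_id, submatrix_id_id]
    _ = (Rm * Hh + vecMulVec rtil (Pi.single last hh)) * Rm⁻¹ := by
        rw [submatrix_mul_eq_castSucc_add_last, ← hRm, ← hHh, hrtil, ← hHhat_last]; rfl
    _ = _ := by
        rw [add_mul, vecMulVec_mul, single_vecMul, hinv_last, vecMulVec_smul, div_eq_mul_inv,
          mul_smul, ← vecMulVec_smul (Rm last last)⁻¹, ← Pi.single_smul', smul_eq_mul, mul_one]
end

section
/- Let m be a positive integer. Let R ∈ ℝ^{(m+1)×(m+1)} be upper triangular and invertible, with leading m×m principal submatrix R_m. Let Ĥ ∈ ℝ^{(m+1)×m} be a matrix whose first m rows form H^{(h)} ∈ ℝ^{m×m} and whose last row is the zero row (h^{(h)} = 0, happy breakdown). Let H̄ = R·Ĥ·R_m⁻¹ and let H ∈ ℝ^{m×m} be the matrix of the first m rows of H̄. Then H = R_m·H^{(h)}·R_m⁻¹; in particular H and H^{(h)} are similar and have the same characteristic polynomial (hence the same eigenvalues). -/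
/-! At breakdown the last row of `Ĥ` vanishes, so the first `m` rows of `R Ĥ` only see the
leading block `R_m` of `R`, i.e. they equal `R_m H⁽ʰ⁾`. Hence `H = R_m H⁽ʰ⁾ R_m⁻¹`, and `R_m` is
invertible because an invertible upper triangular matrix has unit diagonal entries. -/

namespace Matrix

variable {l n m R α : Type*}

theorem IsUpperTriangular.isUnit_submatrix [CommRing R] [Fintype m] [LinearOrder m]
    [Fintype n] [LinearOrder n] {M : Matrix m m R}
    (hM : M.IsUpperTriangular) (hunit : IsUnit M) {f : n → m} (hf : StrictMono f) :
    IsUnit (M.submatrix f f) := by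
  have hsub : (M.submatrix f f).IsUpperTriangular := fun _ _ hij => hM (hf hij)
  rw [isUnit_iff_isUnit_det, det_of_isUpperTriangular hM, IsUnit.prod_iff] at hunit
  rw [isUnit_iff_isUnit_det, det_of_isUpperTriangular hsub, IsUnit.prod_iff]
  exact fun i _ => hunit (f i) (Finset.mem_univ _)

theorem mul_eq_submatrix_castSucc_mul_submatrix_castSucc [NonUnitalNonAssocSemiring α] {k : ℕ}
    (M : Matrix l (Fin (k + 1)) α) {A : Matrix (Fin (k + 1)) n α}
    (hA : ∀ j, A (Fin.last k) j = 0) :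
    M * A = M.submatrix id Fin.castSucc * A.submatrix Fin.castSucc id := by
  ext i j
  simp [mul_apply, Fin.sum_univ_castSucc, hA]

end Matrix

open Matrix

theorem arnoldi_hessenberg_same_eigenvalues_at_breakdown_general
    (m : ℕ)
    (R : Matrix (Fin (m + 1)) (Fin (m + 1)) ℝ)
    (htri : ∀ i j : Fin (m + 1), (j : ℕ) < (i : ℕ) → R i j = 0)
    (hinv : IsUnit R)
    (Rm : Matrix (Fin m) (Fin m) ℝ)
    (hRm : Rm = R.submatrix Fin.castSucc Fin.castSucc)
    (Hhat : Matrix (Fin (m + 1)) (Fin m) ℝ)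
    (Hh : Matrix (Fin m) (Fin m) ℝ)
    (hHh : Hh = Hhat.submatrix Fin.castSucc id)
    (hrow : ∀ j : Fin m, Hhat (Fin.last m) j = 0)
    (Hbar : Matrix (Fin (m + 1)) (Fin m) ℝ)
    (hHbar : Hbar = R * Hhat * Rm⁻¹)
    (H : Matrix (Fin m) (Fin m) ℝ)
    (hH : H = Hbar.submatrix Fin.castSucc id) :
    H = Rm * Hh * Rm⁻¹ ∧ H.charpoly = Hh.charpoly := by
  have hRm_unit : IsUnit Rm :=
    hRm ▸ IsUpperTriangular.isUnit_submatrix (fun i j => htri i j) hinv Fin.strictMono_castSucc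
  have hconj : H = Rm * Hh * Rm⁻¹ := by
    rw [hH, hHbar, mul_eq_submatrix_castSucc_mul_submatrix_castSucc R hrow,
      submatrix_mul _ _ _ id id Function.bijective_id,
      submatrix_mul _ _ _ id id Function.bijective_id]
    simp [hRm, hHh]
  exact ⟨hconj, hconj ▸ charpoly_units_conj hRm_unit.unit Hh⟩

/-- with `R ∈ ℝ^{(m+1)×(m+1)}` upper triangular invertible, `Rm` its
leading principal submatrix, `Ĥ ∈ ℝ^{(m+1)×m}` with first `m` rows `H⁽ʰ⁾` and zero
last row (happy breakdown), `H̄ = R·Ĥ·Rm⁻¹` and `H` the first `m` rows of `H̄`, one has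
`H = Rm·H⁽ʰ⁾·Rm⁻¹`; in particular `H` and `H⁽ʰ⁾` have the same characteristic
polynomial (hence the same eigenvalues). -/
theorem arnoldi_hessenberg_same_eigenvalues_at_breakdown
    (m : ℕ) (hm : 0 < m)
    (R : Matrix (Fin (m + 1)) (Fin (m + 1)) ℝ)
    (htri : ∀ i j : Fin (m + 1), (j : ℕ) < (i : ℕ) → R i j = 0)
    (hinv : IsUnit R)
    (Rm : Matrix (Fin m) (Fin m) ℝ)
    (hRm : Rm = R.submatrix Fin.castSucc Fin.castSucc)
    (Hhat : Matrix (Fin (m + 1)) (Fin m) ℝ)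
    (Hh : Matrix (Fin m) (Fin m) ℝ)
    (hHh : Hh = Hhat.submatrix Fin.castSucc id)
    (hrow : ∀ j : Fin m, Hhat (Fin.last m) j = 0)
    (Hbar : Matrix (Fin (m + 1)) (Fin m) ℝ)
    (hHbar : Hbar = R * Hhat * Rm⁻¹)
    (H : Matrix (Fin m) (Fin m) ℝ)
    (hH : H = Hbar.submatrix Fin.castSucc id) :
    H = Rm * Hh * Rm⁻¹ ∧ H.charpoly = Hh.charpoly :=
  arnoldi_hessenberg_same_eigenvalues_at_breakdown_general m R htri hinv Rm hRm Hhat Hh hHh hrow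
    Hbar hHbar H hH
end

section
/- Let n, m be positive integers. Let A ∈ ℝ^{n×n}, Q ∈ ℝ^{n×(m+1)}, and H̄ ∈ ℝ^{(m+1)×m} satisfy A·Q_m = Q·H̄, where Q_m is the matrix of the first m columns of Q. Let E ∈ ℝ^{(m+1)×m} be the matrix whose top m×m block is the identity I_m and whose last row is zero. Suppose σ ∈ ℝ, u ∈ ℝ^{m+1}, and v ∈ ℝ^m satisfy (H̄ − E)·v = σ·u. Then the vector q = Q_m·v satisfies A·q − q = σ·Q·u. -/
namespace Matrix

variable {R ι : Type*}

theorem eq_one_submatrix_castSucc_of_apply_eq_ite [Zero R] [One R] {m : ℕ}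
    {E : Matrix (Fin (m + 1)) (Fin m) R}
    (hE : ∀ (i : Fin (m + 1)) (j : Fin m), E i j = if (i : ℕ) = (j : ℕ) then 1 else 0) :
    E = (1 : Matrix (Fin (m + 1)) (Fin (m + 1)) R).submatrix id Fin.castSucc := by
  ext i j
  simp [hE, one_apply, Fin.ext_iff]

theorem mulVec_sub_eq_smul_of_mul_eq_mul [CommRing R] {κ μ : Type*} [Fintype ι] [Fintype κ]
    [Fintype μ] {A : Matrix ι ι R} {Q : Matrix ι μ R} {Qm : Matrix ι κ R} {H E : Matrix μ κ R}
    (hA : A * Qm = Q * H) (hE : Q * E = Qm) {σ : R} {u : μ → R} {v : κ → R}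
    (hv : (H - E) *ᵥ v = σ • u) :
    A *ᵥ (Qm *ᵥ v) - Qm *ᵥ v = σ • Q *ᵥ u := by
  calc A *ᵥ (Qm *ᵥ v) - Qm *ᵥ v = (Q * H) *ᵥ v - (Q * E) *ᵥ v := by
        rw [mulVec_mulVec, hA, hE]
    _ = Q *ᵥ ((H - E) *ᵥ v) := by rw [← sub_mulVec, ← Matrix.mul_sub, mulVec_mulVec]
    _ = σ • Q *ᵥ u := by rw [hv, mulVec_smul]

end Matrix

theorem refined_hessenberg_pagerank_residual_general
    (n m : ℕ)
    (A : Matrix (Fin n) (Fin n) ℝ)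
    (Q : Matrix (Fin n) (Fin (m + 1)) ℝ)
    (Hbar : Matrix (Fin (m + 1)) (Fin m) ℝ)
    (hdec : A * Q.submatrix id Fin.castSucc = Q * Hbar)
    (E : Matrix (Fin (m + 1)) (Fin m) ℝ)
    (hE : ∀ (i : Fin (m + 1)) (j : Fin m), E i j = if (i : ℕ) = (j : ℕ) then 1 else 0)
    (σ : ℝ) (u : Fin (m + 1) → ℝ) (v : Fin m → ℝ)
    (hsv : (Hbar - E).mulVec v = σ • u)
    (q : Fin n → ℝ) (hq : q = (Q.submatrix id Fin.castSucc).mulVec v) :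
    A.mulVec q - q = σ • Q.mulVec u := by
  have hQE : Q * E = Q.submatrix id Fin.castSucc := by
    rw [Matrix.eq_one_submatrix_castSucc_of_apply_eq_ite hE]
    exact Matrix.mul_submatrix_one (Equiv.refl _) Fin.castSucc Q
  subst hq
  exact Matrix.mulVec_sub_eq_smul_of_mul_eq_mul hdec hQE hsv

/-- Theorem 3.1, Eq. (2.4): if `A·Qm = Q·H̄` with `Qm` the first `m`
columns of `Q`, `E` is the `(m+1)×m` matrix with top block `I_m` and zero last row,
and `(H̄ − E)·v = σ·u`, then `q = Qm·v` satisfies `A·q − q = σ·Q·u`. -/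
theorem refined_hessenberg_pagerank_residual
    (n m : ℕ) (hn : 0 < n) (hm : 0 < m)
    (A : Matrix (Fin n) (Fin n) ℝ)
    (Q : Matrix (Fin n) (Fin (m + 1)) ℝ)
    (Hbar : Matrix (Fin (m + 1)) (Fin m) ℝ)
    (hdec : A * Q.submatrix id Fin.castSucc = Q * Hbar)
    (E : Matrix (Fin (m + 1)) (Fin m) ℝ)
    (hE : ∀ (i : Fin (m + 1)) (j : Fin m), E i j = if (i : ℕ) = (j : ℕ) then 1 else 0)
    (σ : ℝ) (u : Fin (m + 1) → ℝ) (v : Fin m → ℝ)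
    (hsv : (Hbar - E).mulVec v = σ • u)
    (q : Fin n → ℝ) (hq : q = (Q.submatrix id Fin.castSucc).mulVec v) :
    A.mulVec q - q = σ • Q.mulVec u :=
  refined_hessenberg_pagerank_residual_general n m A Q Hbar hdec E hE σ u v hsv q hq
end

section
/- Let n, m be positive integers. Let A ∈ ℝ^{n×n}, Q ∈ ℝ^{n×(m+1)} with QᵀQ = I_{m+1} (orthonormal columns), and H̄ ∈ ℝ^{(m+1)×m} satisfy A·Q_m = Q·H̄, where Q_m is the matrix of the first m columns of Q. Let E ∈ ℝ^{(m+1)×m} be the matrix whose top m×m block is I_m and whose last row is zero. Suppose σ ≥ 0, u ∈ ℝ^{m+1} with ‖u‖₂ = 1, and v ∈ ℝ^m satisfy (H̄ − E)·v = σ·u. Then the vector q = Q_m·v satisfies ‖A·q − q‖₂ = σ. -/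
/-!
Since the first `m` columns of `Q` are `Q * E`, the Arnoldi relation gives
`A q - q = Q ((H̄ - E) v) = σ • Q u`, and multiplication by a matrix with orthonormal columns
preserves Euclidean length, so `‖A q - q‖₂ = σ ‖u‖₂ = σ`.
-/

open Matrix

namespace Matrix

theorem submatrix_id_castSucc_eq_mul {R l : Type*} [NonAssocSemiring R] {m : ℕ}
    {E : Matrix (Fin (m + 1)) (Fin m) R}
    (hE : ∀ (i : Fin (m + 1)) (j : Fin m), E i j = if (i : ℕ) = (j : ℕ) then 1 else 0)
    (Q : Matrix l (Fin (m + 1)) R) :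
    Q.submatrix id Fin.castSucc = Q * E := by
  ext i j
  have hEj : ∀ k, E k j = if k = Fin.castSucc j then 1 else 0 := fun k => by
    simp only [hE, Fin.ext_iff, Fin.val_castSucc]
  simp [mul_apply, hEj]

theorem mulVec_mulVec_sub_mulVec_of_mul_eq {R l k p : Type*} [CommRing R] [Fintype l] [Fintype k]
    [Fintype p] {A : Matrix l l R} {Q : Matrix l k R} {H E : Matrix k p R}
    (hdec : A * (Q * E) = Q * H) (v : p → R) :
    A *ᵥ (Q * E) *ᵥ v - (Q * E) *ᵥ v = Q *ᵥ (H - E) *ᵥ v := by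
  rw [mulVec_mulVec, hdec, ← mulVec_mulVec, ← mulVec_mulVec, sub_mulVec, mulVec_sub]

theorem dotProduct_mulVec_self_of_transpose_mul_self {R l k : Type*} [CommSemiring R]
    [Fintype l] [Fintype k] [DecidableEq k] {Q : Matrix l k R} (hQ : Qᵀ * Q = 1)
    (w : k → R) :
    (Q *ᵥ w) ⬝ᵥ (Q *ᵥ w) = w ⬝ᵥ w := by
  nth_rw 1 [← vecMul_transpose]
  rw [dotProduct_mulVec, vecMul_vecMul, hQ, vecMul_one]

end Matrix

theorem Real.sqrt_sum_sq_smul {ι : Type*} [Fintype ι] (c : ℝ) (u : ι → ℝ) :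
    √(∑ i, (c • u) i ^ 2) = |c| * √(∑ i, u i ^ 2) := by
  simp only [Pi.smul_apply, smul_eq_mul, mul_pow, ← Finset.mul_sum]
  rw [Real.sqrt_mul (sq_nonneg c), Real.sqrt_sq_eq_abs]

theorem refined_arnoldi_pagerank_residual_two_norm_general
    (n m : ℕ)
    (A : Matrix (Fin n) (Fin n) ℝ)
    (Q : Matrix (Fin n) (Fin (m + 1)) ℝ)
    (hortho : Q.transpose * Q = (1 : Matrix (Fin (m + 1)) (Fin (m + 1)) ℝ))
    (Hbar : Matrix (Fin (m + 1)) (Fin m) ℝ)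
    (hdec : A * Q.submatrix id Fin.castSucc = Q * Hbar)
    (E : Matrix (Fin (m + 1)) (Fin m) ℝ)
    (hE : ∀ (i : Fin (m + 1)) (j : Fin m), E i j = if (i : ℕ) = (j : ℕ) then 1 else 0)
    (σ : ℝ) (hσ : 0 ≤ σ) (u : Fin (m + 1) → ℝ) (v : Fin m → ℝ)
    (hu : Real.sqrt (∑ i, u i ^ 2) = 1)
    (hsv : (Hbar - E).mulVec v = σ • u)
    (q : Fin n → ℝ) (hq : q = (Q.submatrix id Fin.castSucc).mulVec v) :
    Real.sqrt (∑ i, (A.mulVec q - q) i ^ 2) = σ := by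
  rw [submatrix_id_castSucc_eq_mul hE] at hdec hq
  have hres : A *ᵥ q - q = Q *ᵥ (σ • u) := by
    rw [hq, mulVec_mulVec_sub_mulVec_of_mul_eq hdec, hsv]
  have hlen : ∑ i, (Q *ᵥ (σ • u)) i ^ 2 = ∑ i, (σ • u) i ^ 2 := by
    simpa only [dotProduct, sq] using dotProduct_mulVec_self_of_transpose_mul_self hortho (σ • u)
  rw [hres, hlen, Real.sqrt_sum_sq_smul, hu, abs_of_nonneg hσ, mul_one]

/-- if `Q` has orthonormal columns, `A·Qm = Q·H̄`, `E` is the `(m+1)×m`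
matrix with top block `I_m` and zero last row, `σ ≥ 0`, `‖u‖₂ = 1` and
`(H̄ − E)·v = σ·u`, then `q = Qm·v` satisfies `‖A·q − q‖₂ = σ`. -/
theorem refined_arnoldi_pagerank_residual_two_norm
    (n m : ℕ) (hn : 0 < n) (hm : 0 < m)
    (A : Matrix (Fin n) (Fin n) ℝ)
    (Q : Matrix (Fin n) (Fin (m + 1)) ℝ)
    (hortho : Q.transpose * Q = (1 : Matrix (Fin (m + 1)) (Fin (m + 1)) ℝ))
    (Hbar : Matrix (Fin (m + 1)) (Fin m) ℝ)
    (hdec : A * Q.submatrix id Fin.castSucc = Q * Hbar)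
    (E : Matrix (Fin (m + 1)) (Fin m) ℝ)
    (hE : ∀ (i : Fin (m + 1)) (j : Fin m), E i j = if (i : ℕ) = (j : ℕ) then 1 else 0)
    (σ : ℝ) (hσ : 0 ≤ σ) (u : Fin (m + 1) → ℝ) (v : Fin m → ℝ)
    (hu : Real.sqrt (∑ i, u i ^ 2) = 1)
    (hsv : (Hbar - E).mulVec v = σ • u)
    (q : Fin n → ℝ) (hq : q = (Q.submatrix id Fin.castSucc).mulVec v) :
    Real.sqrt (∑ i, (A.mulVec q - q) i ^ 2) = σ :=
  refined_arnoldi_pagerank_residual_two_norm_general n m A Q hortho Hbar hdec E hE σ hσ u v hu hsv q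
    hq
end

section
/- Let n, m be positive integers. Let A ∈ ℝ^{n×n}, Q ∈ ℝ^{n×(m+1)}, and H̄ ∈ ℝ^{(m+1)×m} satisfy A·Q_m = Q·H̄, where Q_m is the matrix of the first m columns of Q. Let E ∈ ℝ^{(m+1)×m} be the matrix whose top m×m block is I_m and whose last row is zero. Suppose σ ≥ 0, u ∈ ℝ^{m+1}, and v ∈ ℝ^m satisfy (H̄ − E)·v = σ·u. Then the vector q = Q_m·v satisfies ‖A·q − q‖₁ = σ·‖Q·u‖₁, where ‖·‖₁ denotes the ℓ¹ norm on ℝ^n. -/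
/-! Since `E` selects the first `m` columns, `Q E = Qₘ`; with `A Qₘ = Q H̄` this gives
`A q - q = Q (H̄ - E) v = σ • Q u`, and the ℓ¹ norm of a nonnegative multiple scales by `σ`. -/

namespace Matrix

theorem eq_one_submatrix_castSucc {R : Type*} [Zero R] [One R] {m : ℕ}
    {E : Matrix (Fin (m + 1)) (Fin m) R}
    (hE : ∀ (i : Fin (m + 1)) (j : Fin m), E i j = if (i : ℕ) = (j : ℕ) then 1 else 0) :
    E = (1 : Matrix (Fin (m + 1)) (Fin (m + 1)) R).submatrix id Fin.castSucc := by
  ext i j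
  simp [hE, one_apply, Fin.ext_iff]

theorem mul_one_submatrix_castSucc {R ι : Type*} [NonAssocSemiring R] {m : ℕ}
    (Q : Matrix ι (Fin (m + 1)) R) :
    Q * (1 : Matrix (Fin (m + 1)) (Fin (m + 1)) R).submatrix id Fin.castSucc =
      Q.submatrix id Fin.castSucc :=
  mul_submatrix_one (Equiv.refl _) Fin.castSucc Q

theorem mulVec_sub_self_eq_smul_of_mul_eq {R ι κ μ : Type*} [CommRing R]
    [Fintype ι] [Fintype κ] [Fintype μ]
    {A : Matrix ι ι R} {Q : Matrix ι κ R} {Qm : Matrix ι μ R} {H E : Matrix κ μ R}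
    (hdec : A * Qm = Q * H) (hE : Q * E = Qm) {σ : R} {u : κ → R} {v : μ → R}
    (hsv : (H - E) *ᵥ v = σ • u) :
    A *ᵥ (Qm *ᵥ v) - Qm *ᵥ v = σ • (Q *ᵥ u) := by
  rw [mulVec_mulVec, hdec, ← hE, ← sub_mulVec, ← Matrix.mul_sub,
    ← mulVec_mulVec, hsv, mulVec_smul]

end Matrix

theorem Finset.sum_abs_smul {ι R : Type*} [Ring R] [LinearOrder R] [IsStrictOrderedRing R]
    (s : Finset ι) (c : R) (x : ι → R) :
    ∑ i ∈ s, |(c • x) i| = |c| * ∑ i ∈ s, |x i| := by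
  simp only [Pi.smul_apply, smul_eq_mul, abs_mul, Finset.mul_sum]

theorem refined_hessenberg_pagerank_residual_one_norm_general
    (n m : ℕ)
    (A : Matrix (Fin n) (Fin n) ℝ)
    (Q : Matrix (Fin n) (Fin (m + 1)) ℝ)
    (Hbar : Matrix (Fin (m + 1)) (Fin m) ℝ)
    (hdec : A * Q.submatrix id Fin.castSucc = Q * Hbar)
    (E : Matrix (Fin (m + 1)) (Fin m) ℝ)
    (hE : ∀ (i : Fin (m + 1)) (j : Fin m), E i j = if (i : ℕ) = (j : ℕ) then 1 else 0)
    (σ : ℝ) (hσ : 0 ≤ σ) (u : Fin (m + 1) → ℝ) (v : Fin m → ℝ)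
    (hsv : (Hbar - E).mulVec v = σ • u)
    (q : Fin n → ℝ) (hq : q = (Q.submatrix id Fin.castSucc).mulVec v) :
    ∑ i, |(A.mulVec q - q) i| = σ * ∑ i, |Q.mulVec u i| := by
  have hQE : Q * E = Q.submatrix id Fin.castSucc := by
    rw [Matrix.eq_one_submatrix_castSucc hE, Matrix.mul_one_submatrix_castSucc]
  rw [hq, Matrix.mulVec_sub_self_eq_smul_of_mul_eq hdec hQE hsv, Finset.sum_abs_smul,
    abs_of_nonneg hσ]

/-- Eq. (2.5): if `A·Qm = Q·H̄` with `Qm` the first `m` columns of `Q`,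
`E` is the `(m+1)×m` matrix with top block `I_m` and zero last row, `σ ≥ 0` and
`(H̄ − E)·v = σ·u`, then `q = Qm·v` satisfies `‖A·q − q‖₁ = σ·‖Q·u‖₁`. -/
theorem refined_hessenberg_pagerank_residual_one_norm
    (n m : ℕ) (hn : 0 < n) (hm : 0 < m)
    (A : Matrix (Fin n) (Fin n) ℝ)
    (Q : Matrix (Fin n) (Fin (m + 1)) ℝ)
    (Hbar : Matrix (Fin (m + 1)) (Fin m) ℝ)
    (hdec : A * Q.submatrix id Fin.castSucc = Q * Hbar)
    (E : Matrix (Fin (m + 1)) (Fin m) ℝ)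
    (hE : ∀ (i : Fin (m + 1)) (j : Fin m), E i j = if (i : ℕ) = (j : ℕ) then 1 else 0)
    (σ : ℝ) (hσ : 0 ≤ σ) (u : Fin (m + 1) → ℝ) (v : Fin m → ℝ)
    (hsv : (Hbar - E).mulVec v = σ • u)
    (q : Fin n → ℝ) (hq : q = (Q.submatrix id Fin.castSucc).mulVec v) :
    ∑ i, |(A.mulVec q - q) i| = σ * ∑ i, |Q.mulVec u i| :=
  refined_hessenberg_pagerank_residual_one_norm_general n m A Q Hbar hdec E hE σ hσ u v hsv q hq
end
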